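/- arXiv:1212.4713 — 4 statements merged into one kernel-verified Lean document; each statement's English description precedes it below -/
import Mathlib

section
/- For every real number r with 0 < r < 1 and every complex number q with |q| ≤ r, the series ∑_{n=1}^∞ |log |1 − qⁿ|| converges and satisfies ∑_{n=1}^∞ |log |1 − qⁿ|| ≤ (−log(1−r))/(r(1−r)) · |q|. -/
/-!
For `‖z‖ < 1` the triangle inequality gives `1 - ‖z‖ ≤ ‖1 - z‖ ≤ 1 + ‖z‖ ≤ (1 - ‖z‖)⁻¹`, so
`|log ‖1 - z‖| ≤ -log (1 - ‖z‖)`. Concavity of `log` turns this into the linear bound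
`-log (1 - x) ≤ (x / r) (-log (1 - r))` for `0 ≤ x ≤ r`, so the series is dominated by the
geometric series `(-log (1 - r) / r) ∑ ‖q‖ⁿ⁺¹ = (-log (1 - r) / r) ‖q‖ / (1 - ‖q‖)`, and
`‖q‖ ≤ r` finishes.
-/

open Real

lemma abs_log_norm_one_sub_le {R : Type*} [SeminormedRing R] [NormOneClass R] {z : R}
    (hz : ‖z‖ < 1) : |log ‖1 - z‖| ≤ -log (1 - ‖z‖) := by
  have hpos : 0 < 1 - ‖z‖ := sub_pos.mpr hz
  have hlower : 1 - ‖z‖ ≤ ‖1 - z‖ := by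
    simpa only [norm_one] using norm_sub_norm_le (1 : R) z
  have hupper : ‖1 - z‖ ≤ (1 - ‖z‖)⁻¹ := by
    calc ‖1 - z‖ ≤ ‖(1 : R)‖ + ‖z‖ := norm_sub_le _ _
      _ = 1 + ‖z‖ := by rw [norm_one]
      _ ≤ (1 - ‖z‖)⁻¹ := by
        rw [le_inv_comm₀ (by linarith [norm_nonneg z]) hpos, ← sub_nonneg]
        have : (1 + ‖z‖)⁻¹ - (1 - ‖z‖) = ‖z‖ ^ 2 / (1 + ‖z‖) := by
          field_simp
          ring
        rw [this]
        positivity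
  rw [abs_le]
  constructor
  · linarith [log_le_log hpos hlower]
  · simpa only [log_inv] using log_le_log (hpos.trans_le hlower) hupper

lemma neg_log_one_sub_le_div_mul {r x : ℝ} (hr0 : 0 < r) (hr1 : r < 1) (hx0 : 0 ≤ x)
    (hxr : x ≤ r) : -log (1 - x) ≤ x / r * -log (1 - r) := by
  have ht0 : 0 ≤ x / r := div_nonneg hx0 hr0.le
  have ht1 : x / r ≤ 1 := (div_le_one hr0).mpr hxr
  have hconc := strictConcaveOn_log_Ioi.concaveOn.2 (Set.mem_Ioi.mpr one_pos)
    (Set.mem_Ioi.mpr (sub_pos.mpr hr1)) (sub_nonneg.mpr ht1) ht0 (sub_add_cancel 1 (x / r))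
  have hcomb : (1 - x / r) • (1 : ℝ) + (x / r) • (1 - r) = 1 - x := by
    simp only [smul_eq_mul]
    field_simp
    ring
  rw [hcomb, smul_eq_mul, smul_eq_mul, log_one, mul_zero, zero_add] at hconc
  linarith

lemma abs_log_norm_one_sub_pow_le {r : ℝ} (hr0 : 0 < r) (hr1 : r < 1) {q : ℂ} (hq : ‖q‖ ≤ r)
    (n : ℕ) : |log ‖1 - q ^ (n + 1)‖| ≤ -log (1 - r) / r * ‖q‖ * ‖q‖ ^ n := by
  have hqn : ‖q ^ (n + 1)‖ ≤ r := by
    rw [norm_pow]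
    exact (pow_le_of_le_one (norm_nonneg q) (hq.trans hr1.le) n.succ_ne_zero).trans hq
  calc |log ‖1 - q ^ (n + 1)‖| ≤ -log (1 - ‖q ^ (n + 1)‖) :=
        abs_log_norm_one_sub_le (hqn.trans_lt hr1)
    _ ≤ ‖q ^ (n + 1)‖ / r * -log (1 - r) :=
        neg_log_one_sub_le_div_mul hr0 hr1 (norm_nonneg _) hqn
    _ = -log (1 - r) / r * ‖q‖ * ‖q‖ ^ n := by
        rw [norm_pow]
        ring

theorem stmt_0 (r : ℝ) (hr0 : 0 < r) (hr1 : r < 1) (q : ℂ) (hq : ‖q‖ ≤ r) :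
    Summable (fun n : ℕ => |Real.log (‖1 - q ^ (n + 1)‖)|) ∧
      ∑' n : ℕ, |Real.log (‖1 - q ^ (n + 1)‖)| ≤
        -Real.log (1 - r) / (r * (1 - r)) * ‖q‖ := by
  set C := -log (1 - r) / r
  have hC : 0 ≤ C := div_nonneg (neg_nonneg.mpr (log_nonpos (by linarith) (by linarith))) hr0.le
  have hq1 : ‖q‖ < 1 := hq.trans_lt hr1
  have hgeom : HasSum (fun n : ℕ => C * ‖q‖ * ‖q‖ ^ n) (C * ‖q‖ * (1 - ‖q‖)⁻¹) :=
    (hasSum_geometric_of_lt_one (norm_nonneg q) hq1).mul_left _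
  have hbound := abs_log_norm_one_sub_pow_le hr0 hr1 hq
  have hsum := hgeom.summable.of_nonneg_of_le (fun n => abs_nonneg _) hbound
  refine ⟨hsum, ?_⟩
  calc ∑' n : ℕ, |log ‖1 - q ^ (n + 1)‖| ≤ C * ‖q‖ * (1 - ‖q‖)⁻¹ :=
        hasSum_le hbound hsum.hasSum hgeom
    _ ≤ C * ‖q‖ * (1 - r)⁻¹ := by gcongr
    _ = -log (1 - r) / (r * (1 - r)) * ‖q‖ := by
        rw [div_mul_eq_div_div]
        ring
end

section
/- Let p be a prime number. For every τ in the complex upper half-plane with Im τ ≥ √3/2 (in particular for every τ in 𝒟 + ℤ, the translates of the standard fundamental domain), one has | log |g(τ)| + (p−1) · log |q_τ| | ≤ 25 · |q_τ|. -/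
/-- `q_τ = exp(2πiτ)`. -/
noncomputable def qt (τ : ℂ) : ℂ := Complex.exp (2 * Real.pi * Complex.I * τ)

/-- `g(τ) = exp(2πi(1−p)τ) · ∏_{n ≥ 1, p ∤ n} (1 − q_τⁿ)²⁴`. -/
noncomputable def modg (p : ℕ) (τ : ℂ) : ℂ :=
  Complex.exp (2 * Real.pi * Complex.I * ((1 : ℂ) - (p : ℂ)) * τ) *
    ∏' n : {n : ℕ // 0 < n ∧ ¬ p ∣ n}, (1 - qt τ ^ (n : ℕ)) ^ 24

/-! Taking logarithms turns the product into a sum: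
`log |g(τ)| + (p - 1) log |q| = 24 · Re ∑_{p ∤ n} log (1 - qⁿ)`. Since
`|log (1 - w)| ≤ |w| / (1 - |w|)`, the sum is at most `∑_{n ≥ 1} rⁿ / (1 - r) = r / (1 - r)²`
in absolute value, where `r = |q| ≤ e^{-π√3} < 1/50`, and `24 r / (1 - r)² ≤ 25 r`. -/

open Complex

lemma Complex.norm_log_one_sub_le {z : ℂ} (hz : ‖z‖ < 1) :
    ‖log (1 - z)‖ ≤ ‖z‖ / (1 - ‖z‖) := by
  have h := norm_log_one_add_le (z := -z) (by rwa [norm_neg])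
  rw [norm_neg, ← sub_eq_add_neg] at h
  have h1 : 0 < 1 - ‖z‖ := by linarith
  have hsplit : ‖z‖ / (1 - ‖z‖) = ‖z‖ + ‖z‖ ^ 2 * (1 - ‖z‖)⁻¹ := by
    field_simp
    ring
  have : 0 ≤ ‖z‖ ^ 2 * (1 - ‖z‖)⁻¹ := by positivity
  linarith

section QProduct

variable {q : ℂ} {s : Set ℕ}

lemma norm_log_one_sub_pow_le (hq : ‖q‖ < 1) {n : ℕ} (hn : n ≠ 0) :
    ‖log (1 - q ^ n)‖ ≤ ‖q‖ ^ n / (1 - ‖q‖) := by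
  have hqn : ‖q ^ n‖ ≤ ‖q‖ := by
    rw [norm_pow]; exact pow_le_of_le_one (norm_nonneg q) hq.le hn
  calc ‖log (1 - q ^ n)‖ ≤ ‖q ^ n‖ / (1 - ‖q ^ n‖) := norm_log_one_sub_le (hqn.trans_lt hq)
    _ ≤ ‖q‖ ^ n / (1 - ‖q‖) := by
      rw [norm_pow] at hqn ⊢
      gcongr

lemma summable_log_one_sub_pow (hq : ‖q‖ < 1) :
    Summable fun n : s ↦ log (1 - q ^ (n : ℕ)) := by
  have hgeo : Summable fun n : ℕ ↦ -q ^ n :=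
    (summable_geometric_of_norm_lt_one hq).neg
  simpa only [sub_eq_add_neg] using
    summable_log_one_add_of_summable (f := fun n : s ↦ -q ^ (n : ℕ)) (hgeo.subtype s)

lemma norm_tsum_log_one_sub_pow_le (hq : ‖q‖ < 1) (hs : 0 ∉ s) :
    ‖∑' n : s, log (1 - q ^ (n : ℕ))‖ ≤ ‖q‖ / (1 - ‖q‖) ^ 2 := by
  set r := ‖q‖
  have hr : 0 < 1 - r := by linarith
  have hgeo : Summable fun m : ℕ ↦ r ^ (m + 1) / (1 - r) :=
    ((summable_geometric_of_lt_one (norm_nonneg q) hq).mul_left r).div_const _ |>.congr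
      fun m ↦ by rw [pow_succ']
  calc ‖∑' n : s, log (1 - q ^ (n : ℕ))‖ ≤ ∑' n : s, ‖log (1 - q ^ (n : ℕ))‖ :=
        norm_tsum_le_tsum_norm (summable_log_one_sub_pow hq).norm
    _ ≤ ∑' m : ℕ, r ^ (m + 1) / (1 - r) := by
      refine (summable_log_one_sub_pow hq).norm.tsum_le_tsum_of_inj (fun n : s ↦ (n : ℕ) - 1)
        ?_ (fun _ _ ↦ by positivity) ?_ hgeo
      · intro a b hab
        have ha : (a : ℕ) ≠ 0 := fun h ↦ hs (h ▸ a.2)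
        have hb : (b : ℕ) ≠ 0 := fun h ↦ hs (h ▸ b.2)
        exact Subtype.ext (by simp only at hab; omega)
      · intro n
        have hn : (n : ℕ) ≠ 0 := fun h ↦ hs (h ▸ n.2)
        rw [Nat.sub_add_cancel (Nat.one_le_iff_ne_zero.mpr hn)]
        exact norm_log_one_sub_pow_le hq hn
    _ = r / (1 - r) ^ 2 := by
      rw [tsum_div_const]
      simp_rw [pow_succ']
      rw [tsum_mul_left, tsum_geometric_of_lt_one (r := r) (norm_nonneg q) hq]
      field_simp

lemma hasProd_one_sub_pow (hq : ‖q‖ < 1) (hs : 0 ∉ s) :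
    HasProd (fun n : s ↦ 1 - q ^ (n : ℕ)) (exp (∑' n : s, log (1 - q ^ (n : ℕ)))) := by
  refine hasProd_of_hasSum_log (fun n h ↦ ?_) (summable_log_one_sub_pow hq).hasSum
  have hn : (n : ℕ) ≠ 0 := fun h ↦ hs (h ▸ n.2)
  have h1 : ‖q ^ (n : ℕ)‖ < 1 := by
    rw [norm_pow]; exact pow_lt_one₀ (norm_nonneg q) hq hn
  rw [sub_eq_zero] at h
  simp [← h] at h1

end QProduct

lemma norm_qt (τ : ℂ) : ‖qt τ‖ = Real.exp (-(2 * Real.pi * τ.im)) := by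
  rw [qt, norm_exp]
  congr 1
  simp [mul_re, mul_im]

lemma log_norm_qt (τ : ℂ) : Real.log ‖qt τ‖ = -(2 * Real.pi * τ.im) := by
  rw [norm_qt, Real.log_exp]

-- `1 / 50` is all that the final estimate `24 r / (1 - r) ^ 2 ≤ 25 r` needs.
lemma norm_qt_le_one_div_fifty (τ : ℂ) (hτ : Real.sqrt 3 / 2 ≤ τ.im) : ‖qt τ‖ ≤ 1 / 50 := by
  have hsqrt : (3 / 2 : ℝ) ≤ Real.sqrt 3 := Real.le_sqrt_of_sq_le (by norm_num)
  have him : 4 ≤ 2 * Real.pi * τ.im := by nlinarith [Real.pi_gt_three]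
  have he : (50 : ℝ) ≤ Real.exp 4 := by
    have : (2.7 : ℝ) ^ 4 ≤ Real.exp 1 ^ 4 := by
      gcongr; linarith [Real.exp_one_gt_d9]
    rw [← Real.exp_nat_mul] at this
    norm_num at this ⊢
    linarith
  rw [norm_qt, Real.exp_neg, one_div]
  exact inv_anti₀ (by norm_num) (he.trans (Real.exp_le_exp.mpr him))

lemma log_norm_modg (p : ℕ) {τ : ℂ} (hτ : ‖qt τ‖ < 1) :
    Real.log ‖modg p τ‖ = ((p : ℝ) - 1) * (2 * Real.pi * τ.im) +
      24 * (∑' n : {n : ℕ // 0 < n ∧ ¬ p ∣ n}, log (1 - qt τ ^ (n : ℕ))).re := by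
  have hprod : ∏' n : {n : ℕ // 0 < n ∧ ¬ p ∣ n}, (1 - qt τ ^ (n : ℕ)) ^ 24 =
      exp (∑' n : {n : ℕ // 0 < n ∧ ¬ p ∣ n}, log (1 - qt τ ^ (n : ℕ))) ^ 24 :=
    ((hasProd_one_sub_pow hτ (s := {n : ℕ | 0 < n ∧ ¬ p ∣ n}) (by simp)).pow 24).tprod_eq
  rw [modg, hprod, ← exp_nat_mul, ← exp_add, norm_exp, Real.log_exp]
  simp [mul_re, mul_im]
  ring

theorem stmt_3_general (p : ℕ) (τ : ℂ) (hτ : Real.sqrt 3 / 2 ≤ τ.im) :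
    |Real.log (‖modg p τ‖) + ((p : ℝ) - 1) * Real.log (‖qt τ‖)| ≤
      25 * ‖qt τ‖ := by
  set r := ‖qt τ‖
  have hr50 : r ≤ 1 / 50 := norm_qt_le_one_div_fifty τ hτ
  have hr1 : r < 1 := by linarith
  rw [log_norm_modg p hr1, log_norm_qt]
  set L := ∑' n : {n : ℕ // 0 < n ∧ ¬ p ∣ n}, log (1 - qt τ ^ (n : ℕ))
  have hL : ‖L‖ ≤ r / (1 - r) ^ 2 :=
    norm_tsum_log_one_sub_pow_le hr1 (s := {n : ℕ | 0 < n ∧ ¬ p ∣ n}) (by simp)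
  have hr0 : 0 ≤ r := norm_nonneg _
  calc _ = |24 * L.re| := by congr 1; ring
    _ = 24 * |L.re| := by rw [abs_mul, abs_of_pos (by norm_num)]
    _ ≤ 24 * (r / (1 - r) ^ 2) := by gcongr; exact (abs_re_le_norm L).trans hL
    _ ≤ 25 * r := by
      rw [mul_div_assoc', div_le_iff₀ (by nlinarith)]
      nlinarith [mul_nonneg hr0 (by linarith : (0 : ℝ) ≤ 1 - 50 * r), pow_nonneg hr0 3]

theorem stmt_3 (p : ℕ) (hp : p.Prime) (τ : ℂ) (hτ : Real.sqrt 3 / 2 ≤ τ.im) :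
    |Real.log (‖modg p τ‖) + ((p : ℝ) - 1) * Real.log (‖qt τ‖)| ≤
      25 * ‖qt τ‖ :=
  stmt_3_general p τ hτ
end

section
/- Let p be a prime number. For every point τ₀ of the complex upper half-plane ℍ, there exist a point τ ∈ ℍ and an integer n with τ − n ∈ 𝒟, and an element γ ∈ Γ₀(p), such that either γ·τ₀ = τ or γ·τ₀ = −1/τ. -/
/-- The Möbius action of a matrix in `SL₂(ℤ)` on a complex number. -/
noncomputable def moebius (γ : Matrix.SpecialLinearGroup (Fin 2) ℤ) (τ : ℂ) : ℂ :=
  (((γ : Matrix (Fin 2) (Fin 2) ℤ) 0 0 : ℂ) * τ + ((γ : Matrix (Fin 2) (Fin 2) ℤ) 0 1 : ℂ)) /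
    (((γ : Matrix (Fin 2) (Fin 2) ℤ) 1 0 : ℂ) * τ + ((γ : Matrix (Fin 2) (Fin 2) ℤ) 1 1 : ℂ))

/-! Move `τ₀` into `𝒟` by some `g = (a b; c d) ∈ SL₂(ℤ)`. If `p ∣ c` then `g ∈ Γ₀(p)` already.
Otherwise `c` is a unit mod `p`, so some `n` solves `a + n c ≡ 0 (mod p)`; since `a + n c` is the
lower-left entry of `S Tⁿ g`, this matrix lies in `Γ₀(p)`, and it maps `τ₀` to `-1 / (g • τ₀ + n)`. -/

open UpperHalfPlane ModularGroup

lemma moebius_eq_coe_smul (g : Matrix.SpecialLinearGroup (Fin 2) ℤ) (z : ℍ) :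
    moebius g z = ↑(g • z) := by
  simp [UpperHalfPlane.specialLinearGroup_apply, moebius]

lemma one_le_norm_of_mem_fd {w : ℍ} (hw : w ∈ fd) : 1 ≤ ‖(w : ℂ)‖ := by
  have h : 1 ≤ ‖(w : ℂ)‖ ^ 2 := by rw [Complex.sq_norm]; exact hw.1
  nlinarith [norm_nonneg (w : ℂ)]

lemma exists_intCast_add_mul_eq_zero {p : ℕ} [Fact p.Prime] (a c : ℤ) (hc : (c : ZMod p) ≠ 0) :
    ∃ n : ℤ, ((a + n * c : ℤ) : ZMod p) = 0 := by
  obtain ⟨n, hn⟩ := ZMod.intCast_surjective (-(a : ZMod p) * (c : ZMod p)⁻¹)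
  refine ⟨n, ?_⟩
  push_cast
  rw [hn, mul_assoc, inv_mul_cancel₀ hc]
  ring

lemma S_mul_T_zpow_mul_apply_one_zero (n : ℤ) (g : Matrix.SpecialLinearGroup (Fin 2) ℤ) :
    (S * T ^ n * g) 1 0 = g 0 0 + n * g 1 0 := by
  simp [coe_S, coe_T_zpow, Matrix.mul_apply, Fin.sum_univ_succ]

lemma coe_S_mul_T_zpow_mul_smul (n : ℤ) (g : Matrix.SpecialLinearGroup (Fin 2) ℤ) (z : ℍ) :
    (↑((S * T ^ n * g) • z) : ℂ) = -1 / (↑(g • z) + n) := by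
  rw [mul_smul, mul_smul, modular_S_smul, coe_mk, coe_T_zpow_smul_eq, neg_div, one_div, inv_neg]

theorem stmt_8 (p : ℕ) (hp : p.Prime) (τ₀ : ℂ) (hτ₀ : 0 < τ₀.im) :
    ∃ τ : ℂ, 0 < τ.im ∧
      (∃ n : ℤ, 1 ≤ ‖τ - n‖ ∧ |(τ - (n : ℂ)).re| ≤ 1 / 2) ∧
      ∃ γ ∈ CongruenceSubgroup.Gamma0 p, moebius γ τ₀ = τ ∨ moebius γ τ₀ = -1 / τ := by
  have : Fact p.Prime := ⟨hp⟩
  set z : ℍ := ⟨τ₀, hτ₀⟩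
  obtain ⟨g, hg⟩ := exists_smul_mem_fd z
  have hnorm := one_le_norm_of_mem_fd hg
  have hre : |((g • z : ℍ) : ℂ).re| ≤ 1 / 2 := hg.2
  by_cases hc : ((g 1 0 : ℤ) : ZMod p) = 0
  · exact ⟨(g • z : ℍ), (g • z).im_pos, ⟨0, by simpa using hnorm, by simpa using hre⟩, g,
      CongruenceSubgroup.Gamma0_mem.mpr hc, Or.inl (moebius_eq_coe_smul g z)⟩
  · obtain ⟨n, hn⟩ := exists_intCast_add_mul_eq_zero (g 0 0) (g 1 0) hc
    refine ⟨((g • z : ℍ) : ℂ) + n, by simpa using (g • z).im_pos,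
      ⟨n, by simpa using hnorm, by simpa using hre⟩, S * T ^ n * g, ?_, Or.inr ?_⟩
    · rw [CongruenceSubgroup.Gamma0_mem, S_mul_T_zpow_mul_apply_one_zero]
      exact hn
    · exact (moebius_eq_coe_smul _ z).trans (coe_S_mul_T_zpow_mul_smul n g z)
end

section
/- Let p be a prime number, V a 2-dimensional vector space over the field 𝔽_p = ℤ/pℤ, and v a basis of V (indexed by {1,2}). Let g be a linear automorphism of V which is semisimple (i.e. its minimal polynomial is squarefree) and which is not a scalar multiple of the identity. Then the quadratic form Q : V → 𝔽_p defined by Q(x) = det_v(x, g·x) — the determinant, computed with respect to the basis v, of the pair of vectors (x, g·x) — is surjective onto 𝔽_p. -/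
/-!
In coordinates, with `A` the matrix of `f`, the form is
`Q(x, y) = A₁₀ x² + (A₁₁ - A₀₀) x y - A₀₁ y²`, whose discriminant is `tr A ² - 4 det A`.
If that discriminant vanished, the characteristic polynomial would be a square `(X - l)²`;
a squarefree minimal polynomial then divides `X - l`, making `f` scalar. A binary quadratic
form of nonzero discriminant over a finite field of odd characteristic is surjective, by
completing the square and the pigeonhole argument behind `FiniteField.exists_root_sum_quadratic`;
characteristic `2` only arises for `ZMod 2`, where it is checked by evaluation.
-/

open Polynomial

universe u

section

variable {K : Type u} [Field K]

theorem exists_eq_two_mul_and_eq_sq [Finite K] {a b : K} (h : a ^ 2 = 4 * b) :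
    ∃ l, a = 2 * l ∧ b = l ^ 2 := by
  by_cases hK : ringChar K = 2
  · have : CharP K 2 := ringChar.eq_iff.mp hK
    have h2 : (2 : K) = 0 := CharP.cast_eq_zero K 2
    obtain ⟨l, rfl⟩ := FiniteField.isSquare_of_char_two hK b
    have ha : a = 0 := (pow_eq_zero_iff two_ne_zero).mp (by linear_combination h + 2 * (l * l) * h2)
    exact ⟨l, by rw [ha, h2, zero_mul], (sq l).symm⟩
  · have h2 : (2 : K) ≠ 0 := Ring.two_ne_zero hK
    refine ⟨a / 2, by field_simp, ?_⟩
    field_simp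
    linear_combination -h

theorem Matrix.eq_smul_one_of_charpoly_eq_sq {n : Type*} [Fintype n] [DecidableEq n]
    {A : Matrix n n K} (hss : Squarefree (minpoly K A)) {l : K} (hA : A.charpoly = (X - C l) ^ 2) :
    A = l • 1 := by
  have hdvd : minpoly K A ∣ X - C l :=
    (hss.dvd_pow_iff_dvd two_ne_zero).mp (hA ▸ A.minpoly_dvd_charpoly)
  simpa [sub_eq_zero, Algebra.algebraMap_eq_smul_one] using minpoly.dvd_iff.mp hdvd

theorem Matrix.trace_sq_sub_four_mul_det_ne_zero [Finite K] {A : Matrix (Fin 2) (Fin 2) K}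
    (hss : Squarefree (minpoly K A)) (hns : ∀ c : K, A ≠ c • 1) :
    A.trace ^ 2 - 4 * A.det ≠ 0 := by
  intro h
  obtain ⟨l, htr, hdet⟩ := exists_eq_two_mul_and_eq_sq (sub_eq_zero.mp h)
  refine hns l (Matrix.eq_smul_one_of_charpoly_eq_sq hss ?_)
  rw [A.charpoly_fin_two, htr, hdet, map_mul, map_pow]
  simp only [map_ofNat]
  ring

namespace FiniteField

variable [Fintype K]

theorem exists_quadratic_form_eq_of_ne_zero (hK : ringChar K ≠ 2) {a b c : K} (ha : a ≠ 0)
    (hΔ : b ^ 2 - 4 * a * c ≠ 0) (t : K) : ∃ x y, a * x ^ 2 + b * x * y + c * y ^ 2 = t := by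
  have h2 : (2 : K) ≠ 0 := Ring.two_ne_zero hK
  -- completing the square: `4a (a x² + b x y + c y²) = (2 a x + b y)² - (b² - 4 a c) y²`
  obtain ⟨u, y, huy⟩ := exists_root_sum_quadratic (f := X ^ 2)
    (g := C (-(b ^ 2 - 4 * a * c)) * X ^ 2 + C 0 * X + C (-(4 * a * t)))
    (degree_X_pow 2) (degree_quadratic (neg_ne_zero.mpr hΔ)) (odd_card_of_char_ne_two hK)
  simp only [eval_add, eval_mul, eval_pow, eval_X, eval_C, zero_mul, add_zero] at huy
  refine ⟨(u - b * y) / (2 * a), y, ?_⟩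
  field_simp
  linear_combination huy

theorem exists_quadratic_form_eq (hK : ringChar K ≠ 2) {a b c : K} (hΔ : b ^ 2 - 4 * a * c ≠ 0)
    (t : K) : ∃ x y, a * x ^ 2 + b * x * y + c * y ^ 2 = t := by
  by_cases ha : a = 0
  · by_cases hc : c = 0
    · have hb : b ≠ 0 := by rintro rfl; simp [ha] at hΔ
      exact ⟨t / b, 1, by field_simp; simp [ha, hc]⟩
    · obtain ⟨y, x, h⟩ := exists_quadratic_form_eq_of_ne_zero hK (a := c) (c := a) hc
        (by convert hΔ using 2; ring) t
      exact ⟨x, y, by linear_combination h⟩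
  · exact exists_quadratic_form_eq_of_ne_zero hK ha hΔ t

end FiniteField

end

theorem ZMod.exists_quadratic_form_eq (p : ℕ) [Fact p.Prime] {a b c : ZMod p}
    (hΔ : b ^ 2 - 4 * a * c ≠ 0) (t : ZMod p) : ∃ x y, a * x ^ 2 + b * x * y + c * y ^ 2 = t := by
  obtain rfl | hp := eq_or_ne p 2
  · decide +revert
  · exact FiniteField.exists_quadratic_form_eq (by rwa [ZMod.ringChar_zmod_n]) hΔ t

theorem Module.Basis.det_repr_repr_apply {R M : Type*} [CommRing R] [AddCommGroup M] [Module R M]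
    (b : Module.Basis (Fin 2) R M) (f : Module.End R M) (v : M) :
    Matrix.det !![b.repr v 0, b.repr (f v) 0; b.repr v 1, b.repr (f v) 1] =
      LinearMap.toMatrix b b f 1 0 * b.repr v 0 ^ 2 +
        (LinearMap.toMatrix b b f 1 1 - LinearMap.toMatrix b b f 0 0) * b.repr v 0 * b.repr v 1 +
        -LinearMap.toMatrix b b f 0 1 * b.repr v 1 ^ 2 := by
  simp only [← LinearMap.toMatrix_mulVec_repr b b f v, Matrix.det_fin_two_of, Matrix.mulVec,
    dotProduct, Fin.sum_univ_two]
  ring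

theorem stmt_9_general (p : ℕ) [Fact p.Prime] (V : Type*) [AddCommGroup V] [Module (ZMod p) V]
    (b : Module.Basis (Fin 2) (ZMod p) V) (f : Module.End (ZMod p) V)
    (hss : Squarefree (minpoly (ZMod p) f))
    (hns : ∀ c : ZMod p, f ≠ c • (1 : Module.End (ZMod p) V)) :
    Function.Surjective (fun x : V =>
      Matrix.det !![b.repr x 0, b.repr (f x) 0; b.repr x 1, b.repr (f x) 1]) := by
  set A := LinearMap.toMatrix b b f
  have hA : A.trace ^ 2 - 4 * A.det ≠ 0 := by
    refine Matrix.trace_sq_sub_four_mul_det_ne_zero (by rwa [LinearMap.minpoly_toMatrix]) fun c hc ↦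
      hns c ((LinearMap.toMatrix b b).injective ?_)
    rwa [map_smul, LinearMap.toMatrix_one]
  intro t
  obtain ⟨x, y, hxy⟩ := ZMod.exists_quadratic_form_eq p (a := A 1 0) (b := A 1 1 - A 0 0)
    (c := -A 0 1) (by rw [A.trace_fin_two, A.det_fin_two] at hA; convert hA using 1; ring) t
  refine ⟨b.equivFun.symm ![x, y], ?_⟩
  dsimp only
  rw [b.det_repr_repr_apply]
  simpa using hxy

theorem stmt_9 (p : ℕ) [Fact p.Prime] (V : Type*) [AddCommGroup V] [Module (ZMod p) V]
    (b : Module.Basis (Fin 2) (ZMod p) V) (f : Module.End (ZMod p) V)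
    (hbij : Function.Bijective f)
    (hss : Squarefree (minpoly (ZMod p) f))
    (hns : ∀ c : ZMod p, f ≠ c • (1 : Module.End (ZMod p) V)) :
    Function.Surjective (fun x : V =>
      Matrix.det !![b.repr x 0, b.repr (f x) 0; b.repr x 1, b.repr (f x) 1]) :=
  stmt_9_general p V b f hss hns
end
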